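/- Let m be a matrix over a field with columns indexed by a linearly ordered set. Define r(m)_l as the rank of the submatrix consisting of the first l columns, and R(m) = {l : r(m)_l > r(m)_{l-1}}. Then for two matrices m and n with the same number of columns and equal rank, R(m) ≤_lex R(n) holds if and only if r(m) ≥_lex r(n) (lexicographic comparison of the rank sequences). -/

import Mathlib

open Finset
open scoped symmDiff

/-- `r(m)_l`: the rank of the submatrix consisting of the first `l` columns. -/
noncomputable def rseq {F : Type*} [Field F] {ι : Type*} [Fintype ι] {N : ℕ}
    (m : Matrix ι (Fin N) F) (l : ℕ) : ℕ :=
  (m.submatrix id (fun j : {j : Fin N // (j : ℕ) < l} => (j : Fin N))).rank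

open Classical in
/-- `R(m)`: the set of column indices where the rank sequence steps up. -/
noncomputable def Rset {F : Type*} [Field F] {ι : Type*} [Fintype ι] {N : ℕ}
    (m : Matrix ι (Fin N) F) : Finset (Fin N) :=
  Finset.univ.filter fun l => rseq m (l : ℕ) < rseq m ((l : ℕ) + 1)

/-- Lexicographic strict order on finsets: `s <lex t` iff the minimum of the
symmetric difference `s ∆ t` belongs to `s`. -/
def lexLt {N : ℕ} (s t : Finset (Fin N)) : Prop :=
  ∃ a, a ∈ s \ t ∧ ∀ b ∈ s ∆ t, a ≤ b

/-- Strict lexicographic comparison of the rank sequences `f, g` on `0,…,N`. -/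
def seqLexLt (f g : ℕ → ℕ) (N : ℕ) : Prop :=
  ∃ l ≤ N, f l < g l ∧ ∀ l' < l, f l' = g l'

/-- Weak lexicographic comparison of sequences on `0,…,N`. -/
def seqLexLe (f g : ℕ → ℕ) (N : ℕ) : Prop :=
  (∀ l ≤ N, f l = g l) ∨ seqLexLt f g N

/-! Adding one column raises the rank by at most one, so `r(m)_l` is the number of elements
of `R(m)` below `l`: the rank sequence is the counting function of `R(m)`. For counting functions
of two sets, the first index at which they differ is one past the least element `a` of the
symmetric difference, and the larger count there belongs to the set containing `a`. -/

open Matrix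

section CountBelow

variable {N : ℕ}

def countBelow (s : Finset (Fin N)) (l : ℕ) : ℕ :=
  #(s.filter fun j : Fin N => (j : ℕ) < l)

lemma countBelow_succ (s : Finset (Fin N)) (a : Fin N) :
    countBelow s (a + 1) = countBelow s a + if a ∈ s then 1 else 0 := by
  have hbelow : s.filter (fun j : Fin N => (j : ℕ) < a + 1) =
      s.filter (fun j => j = a) ∪ s.filter (fun j : Fin N => (j : ℕ) < a) := by
    ext j
    simp only [mem_union, mem_filter, Fin.ext_iff, ← and_or_left]
    exact and_congr_right fun _ => by omega
  rw [countBelow, countBelow, hbelow, card_union_of_disjoint, filter_eq', add_comm]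
  · split_ifs <;> simp
  · exact disjoint_filter.2 fun j _ hj => by simp [hj]

lemma countBelow_succ_of_le (s : Finset (Fin N)) {l : ℕ} (h : N ≤ l) :
    countBelow s (l + 1) = countBelow s l := by
  unfold countBelow
  congr 1
  exact filter_congr fun j _ => by have := j.isLt; omega

lemma countBelow_eq_of_forall_lt_mem_iff {s t : Finset (Fin N)} {l : ℕ}
    (h : ∀ j : Fin N, (j : ℕ) < l → (j ∈ s ↔ j ∈ t)) : countBelow s l = countBelow t l := by
  unfold countBelow
  congr 1
  ext j
  simp only [mem_filter]
  exact ⟨fun hj => ⟨(h j hj.2).1 hj.1, hj.2⟩, fun hj => ⟨(h j hj.2).2 hj.1, hj.2⟩⟩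

end CountBelow

section RankSequence

variable {F : Type*} [Field F] {ι : Type*} [Fintype ι] {N : ℕ} (m : Matrix ι (Fin N) F)

lemma rseq_eq_finrank_span (l : ℕ) :
    rseq m l = Module.finrank F (Submodule.span F (m.col '' {j : Fin N | (j : ℕ) < l})) := by
  have hcols : Set.range (m.submatrix id fun j : {j : Fin N // (j : ℕ) < l} => (j : Fin N)).col =
      m.col '' {j | (j : ℕ) < l} := by
    ext v
    constructor
    · rintro ⟨j, rfl⟩
      exact ⟨j, j.2, rfl⟩
    · rintro ⟨j, hj, rfl⟩
      exact ⟨⟨j, hj⟩, rfl⟩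
  rw [rseq, rank_eq_finrank_span_cols, hcols]

lemma rseq_zero : rseq m 0 = 0 := by
  simp [rseq_eq_finrank_span]

lemma rseq_mono : Monotone (rseq m) := fun l l' h => by
  simp only [rseq_eq_finrank_span]
  exact Submodule.finrank_mono <| Submodule.span_mono <| Set.image_mono fun j hj => hj.trans_le h

lemma rseq_succ_of_le {l : ℕ} (h : N ≤ l) : rseq m (l + 1) = rseq m l := by
  have hbelow : {j : Fin N | (j : ℕ) < l + 1} = {j : Fin N | (j : ℕ) < l} := by
    ext j
    simp only [Set.mem_ofPred_eq]
    omega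
  rw [rseq_eq_finrank_span, rseq_eq_finrank_span, hbelow]

lemma rseq_succ_le (a : Fin N) : rseq m (a + 1) ≤ rseq m a + 1 := by
  have hcols : m.col '' {j : Fin N | (j : ℕ) < a + 1} =
      insert (m.col a) (m.col '' {j | (j : ℕ) < a}) := by
    rw [← Set.image_insert_eq]
    congr 1
    ext j
    simp only [Set.mem_ofPred_eq, Set.mem_insert_iff, Fin.ext_iff]
    omega
  rw [rseq_eq_finrank_span, rseq_eq_finrank_span, hcols, Submodule.span_insert]
  refine (Submodule.finrank_add_le_finrank_add_finrank _ _).trans ?_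
  have : Module.finrank F (F ∙ m.col a) ≤ 1 := by
    simpa using finrank_span_le_card ({m.col a} : Set (ι → F))
  omega

lemma mem_Rset_iff (a : Fin N) : a ∈ Rset m ↔ rseq m a < rseq m (a + 1) := by
  simp [Rset]

lemma rseq_succ (a : Fin N) : rseq m (a + 1) = rseq m a + if a ∈ Rset m then 1 else 0 := by
  have := rseq_mono m (Nat.le_add_right a 1)
  have := rseq_succ_le m a
  split_ifs with ha <;> rw [mem_Rset_iff] at ha <;> omega

theorem rseq_eq_countBelow_Rset : rseq m = countBelow (Rset m) := by
  funext l
  induction l with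
  | zero => simp [rseq_zero, countBelow]
  | succ l ih =>
    obtain hl | hl := lt_or_ge l N
    · rw [show l = (⟨l, hl⟩ : Fin N) from rfl, rseq_succ, countBelow_succ, ih]
    · rw [rseq_succ_of_le m hl, countBelow_succ_of_le _ hl, ih]

end RankSequence

section Lex

variable {N : ℕ}

lemma not_seqLexLe_of_seqLexLt {f g : ℕ → ℕ} (h : seqLexLt f g N) : ¬ seqLexLe g f N := by
  obtain ⟨l, hlN, hlt, hbefore⟩ := h
  rintro (heq | ⟨l', -, hlt', hbefore'⟩)
  · exact absurd (heq l hlN) (by omega)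
  · rcases lt_trichotomy l l' with hll' | rfl | hl'l
    · exact absurd (hbefore' l hll') (by omega)
    · omega
    · exact absurd (hbefore l' hl'l) (by omega)

lemma seqLexLt_countBelow {s t : Finset (Fin N)} {a : Fin N} (ha : a ∈ s \ t)
    (hmin : ∀ b ∈ s ∆ t, a ≤ b) : seqLexLt (countBelow t) (countBelow s) N := by
  have hagree : ∀ l ≤ (a : ℕ), countBelow s l = countBelow t l := fun l hl =>
    countBelow_eq_of_forall_lt_mem_iff fun j hj => by
      by_contra hne
      exact absurd (hmin j (mem_symmDiff.2 (by tauto)))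
        (not_le.2 (Fin.lt_def.2 (hj.trans_le hl)))
  rw [mem_sdiff] at ha
  refine ⟨a + 1, a.isLt, ?_, fun l hl => (hagree l (by omega)).symm⟩
  rw [countBelow_succ, countBelow_succ, hagree a le_rfl, if_pos ha.1, if_neg ha.2]
  omega

theorem eq_or_lexLt_iff_seqLexLe_countBelow (s t : Finset (Fin N)) :
    (s = t ∨ lexLt s t) ↔ seqLexLe (countBelow t) (countBelow s) N := by
  refine ⟨?_, fun hle => ?_⟩
  · rintro (rfl | ⟨a, ha, hmin⟩)
    · exact Or.inl fun _ _ => rfl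
    · exact Or.inr (seqLexLt_countBelow ha hmin)
  by_cases hst : s = t
  · exact Or.inl hst
  have hne : (s ∆ t).Nonempty := symmDiff_nonempty.2 hst
  obtain ⟨a, ha, hmin⟩ := (s ∆ t).exists_min_image id hne
  rcases mem_symmDiff.1 ha with hs | ht
  · exact Or.inr ⟨a, mem_sdiff.2 hs, hmin⟩
  · rw [symmDiff_comm] at hmin
    exact absurd hle (not_seqLexLe_of_seqLexLt (seqLexLt_countBelow (mem_sdiff.2 ht) hmin))

end Lex

theorem Rset_lexLe_iff_rseq_lexGe_general {F : Type*} [Field F] {ι₁ ι₂ : Type*}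
    [Fintype ι₁] [Fintype ι₂] {N : ℕ}
    (m : Matrix ι₁ (Fin N) F) (m' : Matrix ι₂ (Fin N) F) :
    (Rset m = Rset m' ∨ lexLt (Rset m) (Rset m')) ↔
      seqLexLe (rseq m') (rseq m) N := by
  rw [rseq_eq_countBelow_Rset, rseq_eq_countBelow_Rset]
  exact eq_or_lexLt_iff_seqLexLe_countBelow _ _

/-- For matrices `m, m'` with the same (ordered) column index set and equal
rank, `R(m) ≤lex R(m')` holds iff `r(m) ≥lex r(m')`. -/
theorem Rset_lexLe_iff_rseq_lexGe {F : Type*} [Field F] {ι₁ ι₂ : Type*}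
    [Fintype ι₁] [Fintype ι₂] {N : ℕ}
    (m : Matrix ι₁ (Fin N) F) (m' : Matrix ι₂ (Fin N) F)
    (hrk : m.rank = m'.rank) :
    (Rset m = Rset m' ∨ lexLt (Rset m) (Rset m')) ↔
      seqLexLe (rseq m') (rseq m) N :=
  Rset_lexLe_iff_rseq_lexGe_general m m'
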